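/- Let G be a 3-free finite simple digraph, let 0 ≤ μ ≤ 1 be real, and let v be a vertex with C(v) ≠ ∅. If g(v) ≥ |C(v)|²·(1+μ)·( (1+μ + √((1+μ)² + (1+μ)))/2 + 1/4 ), then there exists a partition V = V1 ∪ V2 ∪ {v} with B(v) ⊆ V1 and A(v) ⊆ V2 such that the number of missing edges of the partition is at least (1+μ) times the number of decycling edges of the partition. -/

import Mathlib

/-! Put `B(v)` and the vertices `u ∈ C(v)` with `k_v(u) < l_v(u)` into `V1`, and `A(v)` with the
rest of `C(v)` into `V2`. As `G` is `3`-free there is no edge from `A(v)` to `B(v)`, so the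
decycling edges number `M(v) + e(v)`, where `e(v) ≤ |C(v)|² / 4`. A path `a → u → b` with
`a ∈ A(v)`, `b ∈ B(v)` forces `a, b` nonadjacent (either edge closes a triangle), so
`k_v(u) l_v(u) ≤ g(v)` and Cauchy–Schwarz gives `M(v) ≤ |C(v)| √g(v)`. The nonadjacent pairs of
`A(v) × B(v)` are missing edges, and the bound on `g(v)` is what makes
`(1 + μ) (|C(v)| √g(v) + |C(v)|² / 4) ≤ g(v)`. -/

open Finset

variable {V : Type*}

/-- A digraph (given by its edge relation) is acyclic if no vertex lies on a
directed cycle, i.e. no vertex reaches itself by a nonempty directed walk. -/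
def Acyclic (E : V → V → Prop) : Prop := ∀ v : V, ¬ Relation.TransGen E v v

/-- A digraph is `3`-free if it has no directed cycle of length at most three:
no loops, no digons, and no directed triangles. -/
def ThreeFree (E : V → V → Prop) : Prop :=
  (∀ a, ¬ E a a) ∧ (∀ a b, E a b → ¬ E b a) ∧ (∀ a b c, E a b → E b c → ¬ E c a)

variable [Fintype V] [DecidableEq V]

/-- The finset of (directed) edges of the digraph. -/
def edgeFinset (E : V → V → Prop) [DecidableRel E] : Finset (V × V) :=
  Finset.univ.filter fun p => E p.1 p.2

/-- `beta E` is the minimum number of edges whose removal leaves an acyclic digraph. -/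
noncomputable def beta (E : V → V → Prop) [DecidableRel E] : ℕ :=
  sInf {n | ∃ X ⊆ edgeFinset E, X.card = n ∧
    Acyclic (fun a b => E a b ∧ (a, b) ∉ X)}

/-- `gamma E` is the number of unordered pairs of distinct nonadjacent vertices. -/
def gamma (E : V → V → Prop) [DecidableRel E] : ℕ :=
  (Finset.univ.filter fun p : V × V =>
    p.1 ≠ p.2 ∧ ¬ E p.1 p.2 ∧ ¬ E p.2 p.1).card / 2

/-- `outN E v` is the set `A(v)` of out-neighbors of `v`. -/
def outN (E : V → V → Prop) [DecidableRel E] (v : V) : Finset V :=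
  Finset.univ.filter fun w => E v w

/-- `inN E v` is the set `B(v)` of in-neighbors of `v`. -/
def inN (E : V → V → Prop) [DecidableRel E] (v : V) : Finset V :=
  Finset.univ.filter fun w => E w v

/-- `Cset E v` is `C(v) = V \ (A(v) ∪ B(v) ∪ {v})`. -/
def Cset (E : V → V → Prop) [DecidableRel E] (v : V) : Finset V :=
  Finset.univ \ (outN E v ∪ inN E v ∪ {v})

/-- `gmiss E v` is `g(v)`, the number of pairs `(a,b)` with `a ∈ A(v)`, `b ∈ B(v)`
which are nonadjacent. -/
def gmiss (E : V → V → Prop) [DecidableRel E] (v : V) : ℕ :=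
  (((outN E v) ×ˢ (inN E v)).filter fun p => ¬ E p.1 p.2 ∧ ¬ E p.2 p.1).card

/-- `kdeg E v u` is `k_v(u) = |{w ∈ A(v) : (w,u) ∈ E}|`. -/
def kdeg (E : V → V → Prop) [DecidableRel E] (v u : V) : ℕ :=
  ((outN E v).filter fun w => E w u).card

/-- `ldeg E v u` is `l_v(u) = |{w ∈ B(v) : (u,w) ∈ E}|`. -/
def ldeg (E : V → V → Prop) [DecidableRel E] (v u : V) : ℕ :=
  ((inN E v).filter fun w => E u w).card

/-- `CBset E v` is `C_{B(v)} = {u ∈ C(v) : l_v(u) > k_v(u)}`. -/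
def CBset (E : V → V → Prop) [DecidableRel E] (v : V) : Finset V :=
  (Cset E v).filter fun u => kdeg E v u < ldeg E v u

/-- `CAset E v` is `C_{A(v)} = C(v) \ C_{B(v)}`. -/
def CAset (E : V → V → Prop) [DecidableRel E] (v : V) : Finset V :=
  Cset E v \ CBset E v

/-- `eCC E v` is `e(v)`, the number of edges from `C_{A(v)}` to `C_{B(v)}`. -/
def eCC (E : V → V → Prop) [DecidableRel E] (v : V) : ℕ :=
  ((CAset E v ×ˢ CBset E v).filter fun p => E p.1 p.2).card

/-- `Msum E v` is `M(v) = ∑_{u ∈ C(v)} min(k_v(u), l_v(u))`. -/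
def Msum (E : V → V → Prop) [DecidableRel E] (v : V) : ℕ :=
  ∑ u ∈ Cset E v, min (kdeg E v u) (ldeg E v u)

/-- `V1`, `V2`, `{v}` form a partition of the vertex set into disjoint parts. -/
def IsPartitionAt (V1 V2 : Finset V) (v : V) : Prop :=
  Disjoint V1 V2 ∧ v ∉ V1 ∧ v ∉ V2 ∧ V1 ∪ V2 ∪ {v} = Finset.univ

/-- The number of decycling edges of a partition `V1, V2, {v}`: edges from `V2` to `V1`. -/
def decyclingCount (E : V → V → Prop) [DecidableRel E] (V1 V2 : Finset V) : ℕ :=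
  ((V2 ×ˢ V1).filter fun p => E p.1 p.2).card

/-- The number of missing edges of a partition `V1, V2, {v}`: unordered pairs of
distinct nonadjacent vertices not both in `V1` and not both in `V2`. -/
def missingCount (E : V → V → Prop) [DecidableRel E] (V1 V2 : Finset V) : ℕ :=
  (Finset.univ.filter fun p : V × V =>
    p.1 ≠ p.2 ∧ ¬ E p.1 p.2 ∧ ¬ E p.2 p.1 ∧
    ¬ (p.1 ∈ V1 ∧ p.2 ∈ V1) ∧ ¬ (p.1 ∈ V2 ∧ p.2 ∈ V2)).card / 2

section Counting

variable {α : Type*} (E : α → α → Prop) [DecidableRel E]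

lemma decyclingCount_union_left [DecidableEq α] {V1 V1' : Finset α} (V2 : Finset α)
    (h : Disjoint V1 V1') :
    decyclingCount E (V1 ∪ V1') V2 = decyclingCount E V1 V2 + decyclingCount E V1' V2 := by
  rw [decyclingCount, product_union, filter_union,
    card_union_of_disjoint (disjoint_filter_filter (disjoint_product.2 (Or.inr h)))]
  rfl

lemma decyclingCount_union_right [DecidableEq α] (V1 : Finset α) {V2 V2' : Finset α}
    (h : Disjoint V2 V2') :
    decyclingCount E V1 (V2 ∪ V2') = decyclingCount E V1 V2 + decyclingCount E V1 V2' := by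
  rw [decyclingCount, union_product, filter_union,
    card_union_of_disjoint (disjoint_filter_filter (disjoint_product.2 (Or.inl h)))]
  rfl

lemma decyclingCount_eq_sum_tail (V1 V2 : Finset α) :
    decyclingCount E V1 V2 = ∑ u ∈ V2, #(V1.filter (E u)) := by
  rw [decyclingCount, card_filter, sum_product]
  exact sum_congr rfl fun u _ => (card_filter _ _).symm

lemma decyclingCount_eq_sum_head (V1 V2 : Finset α) :
    decyclingCount E V1 V2 = ∑ w ∈ V1, #(V2.filter (E · w)) := by
  rw [decyclingCount, card_filter, sum_product, sum_comm]
  exact sum_congr rfl fun w _ => (card_filter _ _).symm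

variable [Fintype α] {E}

lemma decyclingCount_inN_outN (h3 : ThreeFree E) (v : α) :
    decyclingCount E (inN E v) (outN E v) = 0 := by
  rw [decyclingCount, card_eq_zero, filter_eq_empty_iff]
  intro p hp
  simp only [mem_product, outN, inN, mem_filter, mem_univ, true_and] at hp
  exact fun h => h3.2.2 v p.1 p.2 hp.1 h hp.2

lemma kdeg_mul_ldeg_le_gmiss (h3 : ThreeFree E) (v u : α) :
    kdeg E v u * ldeg E v u ≤ gmiss E v := by
  rw [kdeg, ldeg, ← card_product]
  refine card_le_card fun p hp => ?_
  simp only [mem_product, mem_filter, outN, inN, mem_univ, true_and] at hp ⊢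
  exact ⟨⟨hp.1.1, hp.2.1⟩, fun h => h3.2.2 v p.1 p.2 hp.1.1 h hp.2.1,
    fun h => h3.2.2 p.2 p.1 u h hp.1.2 hp.2.2⟩

end Counting

section Partition

variable (E : V → V → Prop) [DecidableRel E] (v : V)

lemma mem_Cset {u : V} : u ∈ Cset E v ↔ ¬E v u ∧ ¬E u v ∧ u ≠ v := by
  simp only [Cset, outN, inN, mem_sdiff, mem_univ, mem_union, mem_filter, mem_singleton,
    true_and, not_or]
  tauto

lemma CAset_eq_filter : CAset E v = (Cset E v).filter fun u => ¬kdeg E v u < ldeg E v u :=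
  (filter_not _ _).symm

lemma card_CBset_add_card_CAset : #(CBset E v) + #(CAset E v) = #(Cset E v) := by
  rw [CAset_eq_filter]
  exact card_filter_add_card_filter_not _

lemma Msum_eq_sum_CBset_add_sum_CAset :
    Msum E v = ∑ u ∈ CBset E v, kdeg E v u + ∑ u ∈ CAset E v, ldeg E v u := by
  rw [Msum, ← sum_filter_add_sum_filter_not (Cset E v) (fun u => kdeg E v u < ldeg E v u),
    ← CBset, ← CAset_eq_filter]
  congr 1 <;> refine sum_congr rfl fun u hu => ?_
  · exact min_eq_left (mem_filter.1 hu).2.le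
  · rw [CAset_eq_filter, mem_filter, not_lt] at hu
    exact min_eq_right hu.2

lemma four_mul_eCC_le : 4 * eCC E v ≤ #(Cset E v) ^ 2 :=
  calc 4 * eCC E v ≤ 4 * #(CBset E v) * #(CAset E v) := by
        rw [mul_assoc, mul_comm #(CBset E v), ← card_product, eCC]
        exact Nat.mul_le_mul_left _ (card_le_card (filter_subset _ _))
    _ ≤ #(Cset E v) ^ 2 := card_CBset_add_card_CAset E v ▸ four_mul_le_sq_add _ _

/-- A vertex `u ∈ C(v)` placed on the side of `B(v)` receives `k_v(u)` decycling edges from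
`A(v)`, and on the side of `A(v)` it sends `l_v(u)` to `B(v)`: it goes where the count is
smaller. -/
def inPart : Finset V := inN E v ∪ CBset E v

def outPart : Finset V := outN E v ∪ CAset E v

variable {E}

lemma isPartitionAt_inPart_outPart (h3 : ThreeFree E) :
    IsPartitionAt (inPart E v) (outPart E v) v := by
  obtain ⟨hloop, hasymm, -⟩ := h3
  refine ⟨?_, ?_, ?_, ?_⟩
  · rw [disjoint_left]
    simp only [inPart, outPart, CAset, CBset, mem_union, mem_sdiff, mem_filter, inN,
      outN, mem_Cset]
    intro u hu
    have := hasymm u v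
    tauto
  · simp [inPart, CBset, inN, mem_Cset, hloop]
  · simp [outPart, CAset, outN, mem_Cset, hloop]
  · ext u
    simp only [inPart, outPart, CAset, CBset, mem_union, mem_sdiff, mem_filter, inN,
      outN, mem_Cset, mem_singleton, mem_univ, iff_true]
    tauto

lemma decyclingCount_inPart_outPart (h3 : ThreeFree E) :
    decyclingCount E (inPart E v) (outPart E v) = Msum E v + eCC E v := by
  have hB : Disjoint (inN E v) (CBset E v) := by
    rw [disjoint_left]
    intro u hu hCB
    exact ((mem_Cset E v).1 (mem_filter.1 hCB).1).2.1 (by simpa [inN] using hu)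
  have hA : Disjoint (outN E v) (CAset E v) := by
    rw [disjoint_left]
    intro u hu hCA
    exact ((mem_Cset E v).1 (mem_sdiff.1 hCA).1).1 (by simpa [outN] using hu)
  rw [inPart, outPart, decyclingCount_union_left E _ hB, decyclingCount_union_right E _ hA,
    decyclingCount_union_right E _ hA, decyclingCount_inN_outN h3,
    decyclingCount_eq_sum_tail E (inN E v) (CAset E v),
    decyclingCount_eq_sum_head E (CBset E v) (outN E v), Msum_eq_sum_CBset_add_sum_CAset]
  simp only [kdeg, ldeg, eCC, decyclingCount]
  ring

/-- Each nonadjacent pair `(a, b) ∈ A(v) × B(v)` is a missing edge, counted twice among the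
ordered pairs in `missingCount`. -/
lemma gmiss_le_missingCount {V1 V2 : Finset V} (hdisj : Disjoint V1 V2) (hB : inN E v ⊆ V1)
    (hA : outN E v ⊆ V2) : gmiss E v ≤ missingCount E V1 V2 := by
  set G := (outN E v ×ˢ inN E v).filter fun p => ¬E p.1 p.2 ∧ ¬E p.2 p.1
  set S := univ.filter fun p : V × V => p.1 ≠ p.2 ∧ ¬E p.1 p.2 ∧ ¬E p.2 p.1 ∧
    ¬(p.1 ∈ V1 ∧ p.2 ∈ V1) ∧ ¬(p.1 ∈ V2 ∧ p.2 ∈ V2)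
  have hsides : ∀ p ∈ G, p.1 ∈ V2 ∧ p.1 ∉ V1 ∧ p.2 ∈ V1 ∧ p.2 ∉ V2 := fun p hp => by
    have hp := (mem_product.1 (mem_filter.1 hp).1)
    exact ⟨hA hp.1, disjoint_right.1 hdisj (hA hp.1), hB hp.2, disjoint_left.1 hdisj (hB hp.2)⟩
  have hGS : G ⊆ S := fun p hp => by
    obtain ⟨-, hp1, hp2, hp2'⟩ := hsides p hp
    obtain ⟨-, hn⟩ := mem_filter.1 hp
    simp only [S, mem_filter, mem_univ, true_and]
    exact ⟨fun h => hp1 (h ▸ hp2), hn.1, hn.2, fun h => hp1 h.1, fun h => hp2' h.2⟩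
  have hGS' : G.map (Equiv.prodComm V V).toEmbedding ⊆ S := by
    intro q hq
    obtain ⟨p, hp, rfl⟩ := mem_map.1 hq
    have hpS := hGS hp
    simp only [S, mem_filter, mem_univ, true_and] at hpS ⊢
    obtain ⟨hne, h12, h21, h1, h2⟩ := hpS
    exact ⟨Ne.symm hne, h21, h12, fun h => h1 h.symm, fun h => h2 h.symm⟩
  have hdisjG : Disjoint G (G.map (Equiv.prodComm V V).toEmbedding) := by
    rw [disjoint_right]
    intro q hq hqG
    obtain ⟨p, hp, rfl⟩ := mem_map.1 hq
    exact (hsides p hp).2.2.2 (hsides _ hqG).1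
  change #G ≤ #S / 2
  have := card_le_card (union_subset hGS hGS')
  rw [card_union_of_disjoint hdisjG, card_map] at this
  exact (Nat.le_div_iff_mul_le two_pos).2 (by omega)

lemma sq_Msum_le (h3 : ThreeFree E) : Msum E v ^ 2 ≤ #(Cset E v) ^ 2 * gmiss E v :=
  calc Msum E v ^ 2 ≤ #(Cset E v) * ∑ u ∈ Cset E v, min (kdeg E v u) (ldeg E v u) ^ 2 :=
        sq_sum_le_card_mul_sum_sq
    _ ≤ #(Cset E v) * ∑ _u ∈ Cset E v, gmiss E v := by
        gcongr with u
        rw [sq]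
        exact (Nat.mul_le_mul (min_le_left _ _) (min_le_right _ _)).trans
          (kdeg_mul_ldeg_le_gmiss h3 v u)
    _ = #(Cset E v) ^ 2 * gmiss E v := by rw [sum_const, smul_eq_mul]; ring

end Partition

/-- With `r = (ν + √(ν² + ν)) / 2` the larger root of `t² = ν t + ν / 4`, the hypothesis reads
`(c r)² ≤ x²`, and `x² - ν c x - ν c² / 4 = (x - c r) (x - c (ν - r))` with `ν - r ≤ 0`. -/
lemma mul_add_le_sq_of_threshold_le_sq {ν c x : ℝ} (hν : 0 ≤ ν) (hc : 0 ≤ c) (hx : 0 ≤ x)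
    (h : c ^ 2 * ν * ((ν + √(ν ^ 2 + ν)) / 2 + 1 / 4) ≤ x ^ 2) :
    ν * (c * x + c ^ 2 / 4) ≤ x ^ 2 := by
  set s := √(ν ^ 2 + ν)
  set r := (ν + s) / 2
  have hs : s ^ 2 = ν ^ 2 + ν := Real.sq_sqrt (by positivity)
  have hνs : ν ≤ s := Real.le_sqrt_of_sq_le (by linarith)
  have hr : r ^ 2 = ν * r + ν / 4 := by simp only [r]; nlinarith
  have hcr : c * r ≤ x := by
    refine (pow_le_pow_iff_left₀ (by positivity) hx two_ne_zero).1 ?_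
    nlinarith
  have hfactor : x ^ 2 - ν * (c * x + c ^ 2 / 4) = (x - c * r) * (x - c * (ν - r)) := by
    linear_combination c ^ 2 * hr
  have hνr : ν ≤ r := by simp only [r]; linarith
  have hpos : 0 ≤ (x - c * r) * (x - c * (ν - r)) :=
    mul_nonneg (sub_nonneg.2 hcr) (by nlinarith [mul_nonneg hc (sub_nonneg.2 hνr)])
  linarith

lemma mul_add_le_of_sq_le_of_threshold_le {ν c g M e : ℝ} (hν : 0 ≤ ν) (hc : 0 ≤ c)
    (hM : M ^ 2 ≤ c ^ 2 * g) (he : 4 * e ≤ c ^ 2)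
    (h : c ^ 2 * ν * ((ν + √(ν ^ 2 + ν)) / 2 + 1 / 4) ≤ g) : ν * (M + e) ≤ g := by
  have hg : 0 ≤ g := le_trans (by positivity) h
  have hM' : M ≤ c * √g := by
    refine abs_le_of_sq_le_sq' ?_ (by positivity) |>.2
    rwa [mul_pow, Real.sq_sqrt hg]
  calc ν * (M + e) ≤ ν * (c * √g + c ^ 2 / 4) := by gcongr; linarith
    _ ≤ √g ^ 2 :=
        mul_add_le_sq_of_threshold_le_sq hν hc (Real.sqrt_nonneg g) (by rwa [Real.sq_sqrt hg])
    _ = g := Real.sq_sqrt hg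

theorem stmt3_general (E : V → V → Prop) [DecidableRel E] (h3 : ThreeFree E)
    (μ : ℝ) (hμ0 : 0 ≤ μ) (v : V)
    (hg : (gmiss E v : ℝ) ≥ ((Cset E v).card : ℝ) ^ 2 * (1 + μ) *
      ((1 + μ + Real.sqrt ((1 + μ) ^ 2 + (1 + μ))) / 2 + 1 / 4)) :
    ∃ (V1 V2 : Finset V), IsPartitionAt V1 V2 v ∧
      inN E v ⊆ V1 ∧ outN E v ⊆ V2 ∧
      (missingCount E V1 V2 : ℝ) ≥ (1 + μ) * (decyclingCount E V1 V2 : ℝ) := by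
  have hpart := isPartitionAt_inPart_outPart v h3
  refine ⟨inPart E v, outPart E v, hpart, subset_union_left, subset_union_left, ?_⟩
  have hM : (Msum E v : ℝ) ^ 2 ≤ ((Cset E v).card : ℝ) ^ 2 * gmiss E v := by
    exact_mod_cast sq_Msum_le v h3
  have he : 4 * (eCC E v : ℝ) ≤ ((Cset E v).card : ℝ) ^ 2 := by
    exact_mod_cast four_mul_eCC_le E v
  have hmiss : gmiss E v ≤ missingCount E (inPart E v) (outPart E v) :=
    gmiss_le_missingCount v hpart.1 subset_union_left subset_union_left
  rw [decyclingCount_inPart_outPart v h3, Nat.cast_add]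
  calc (1 + μ) * ((Msum E v : ℝ) + eCC E v) ≤ gmiss E v :=
        mul_add_le_of_sq_le_of_threshold_le (by linarith) (Nat.cast_nonneg _) hM he hg
    _ ≤ missingCount E (inPart E v) (outPart E v) := by exact_mod_cast hmiss

/-- Lemma 3.1 of Dunkum–Hamburger–Pór: if `g(v)` is large enough in terms of
`|C(v)|` and `μ`, then some partition `V1, V2, {v}` has missing edges at least
`(1+μ)` times the decycling edges. -/
theorem stmt3 (E : V → V → Prop) [DecidableRel E] (h3 : ThreeFree E)
    (μ : ℝ) (hμ0 : 0 ≤ μ) (hμ1 : μ ≤ 1) (v : V) (hC : Cset E v ≠ ∅)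
    (hg : (gmiss E v : ℝ) ≥ ((Cset E v).card : ℝ) ^ 2 * (1 + μ) *
      ((1 + μ + Real.sqrt ((1 + μ) ^ 2 + (1 + μ))) / 2 + 1 / 4)) :
    ∃ (V1 V2 : Finset V), IsPartitionAt V1 V2 v ∧
      inN E v ⊆ V1 ∧ outN E v ⊆ V2 ∧
      (missingCount E V1 V2 : ℝ) ≥ (1 + μ) * (decyclingCount E V1 V2 : ℝ) :=
  stmt3_general E h3 μ hμ0 v hg
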